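/- arXiv:1810.04725 — 2 statements merged into one kernel-verified Lean document; each statement's English description precedes it below -/
import Mathlib

section
/- Let φ : ℝ → ℝ be continuously differentiable with φ(t) = 0 for t ∉ (0,1) and with derivative φ' Lipschitz. Define φ_1(t) = ∫_t^1 φ'(u) φ'(u−t) du for t ∈ [0,1] and φ_1(t) = 0 for t > 1. Then there is a constant K depending only on φ such that for every integer l_n ≥ 2 and every integer s with 0 ≤ s ≤ l_n, | l_n Σ_{v ∈ ℤ} ( φ((v+1)/l_n) − φ(v/l_n) ) ( φ((v−s+1)/l_n) − φ((v−s)/l_n) ) − φ_1(s/l_n) | ≤ K / l_n. (The sum has only finitely many nonzero terms since φ vanishes outside (0,1).) -/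
open MeasureTheory

/-!
Write `φ((v+1)/l) - φ(v/l)` and `φ((v-s+1)/l) - φ((v-s)/l)` as integrals of `φ'` and of
`φ'(· - s/l)` over the cell `[v/l, (v+1)/l]`. Since `φ'` is Lipschitz and bounded, `l` times the
product of these two integrals differs from the integral of the product `φ'(u) φ'(u - s/l)` over the
cell by `O(l⁻²)`. The `l` cells tile `[0, 1]`, and the integral of the product over `[0, 1]` is
`φ₁(s/l)` because `φ'` vanishes on `(-∞, 0]`; summing the cell errors gives `O(l⁻¹)`.
-/

open Set Finset
open scoped NNReal Interval

lemma LipschitzWith.mul_of_abs_le {α : Type*} [PseudoMetricSpace α] {f g : α → ℝ}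
    {Kf Kg M N : ℝ≥0} (hf : LipschitzWith Kf f) (hg : LipschitzWith Kg g)
    (hfM : ∀ x, |f x| ≤ M) (hgN : ∀ x, |g x| ≤ N) :
    LipschitzWith (M * Kg + N * Kf) fun x ↦ f x * g x := by
  refine LipschitzWith.of_dist_le_mul fun x y ↦ ?_
  have hfxy := hf.dist_le_mul x y
  have hgxy := hg.dist_le_mul x y
  simp only [Real.dist_eq, NNReal.coe_add, NNReal.coe_mul] at *
  calc |f x * g x - f y * g y| = |f x * (g x - g y) + g y * (f x - f y)| := by ring_nf
    _ ≤ |f x| * |g x - g y| + |g y| * |f x - f y| := by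
        rw [← abs_mul, ← abs_mul]; exact abs_add_le _ _
    _ ≤ M * (Kg * dist x y) + N * (Kf * dist x y) := by
        gcongr
        exacts [hfM x, hgN y]
    _ = (M * Kg + N * Kf) * dist x y := by ring

lemma LipschitzWith.abs_integral_sub_mul_le {ψ : ℝ → ℝ} {K : ℝ≥0} (hψ : LipschitzWith K ψ)
    {a b : ℝ} (hab : a ≤ b) :
    |(∫ u in a..b, ψ u) - ψ a * (b - a)| ≤ K * (b - a) ^ 2 := by
  have hconst : ψ a * (b - a) = ∫ _ in a..b, ψ a := by simp [mul_comm]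
  rw [hconst, ← intervalIntegral.integral_sub (hψ.continuous.intervalIntegrable _ _)
    intervalIntegrable_const]
  have hosc : ∀ u ∈ Ι a b, ‖ψ u - ψ a‖ ≤ K * (b - a) := by
    intro u hu
    rw [uIoc_of_le hab] at hu
    have := hψ.dist_le_mul u a
    rw [Real.dist_eq, Real.dist_eq, abs_of_nonneg (sub_nonneg.2 hu.1.le)] at this
    rw [Real.norm_eq_abs]
    exact this.trans (by gcongr; exact hu.2)
  calc _ ≤ K * (b - a) * |b - a| := intervalIntegral.norm_integral_le_of_norm_le_const hosc
    _ = K * (b - a) ^ 2 := by rw [abs_of_nonneg (by linarith)]; ring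

lemma abs_inv_mul_integral_mul_integral_sub_integral_mul_le {f g : ℝ → ℝ} {K : ℝ≥0}
    (hf : LipschitzWith K f) (hg : LipschitzWith K g)
    (hfK : ∀ x, |f x| ≤ K) (hgK : ∀ x, |g x| ≤ K) {a b : ℝ} (hab : a < b) (hba : b - a ≤ 1) :
    |(b - a)⁻¹ * ((∫ u in a..b, f u) * ∫ u in a..b, g u) - ∫ u in a..b, f u * g u|
      ≤ 5 * K ^ 2 * (b - a) ^ 2 := by
  set δ := b - a with hδ
  have hδ0 : 0 < δ := sub_pos.2 hab
  set A := ∫ u in a..b, f u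
  set B := ∫ u in a..b, g u
  set H := ∫ u in a..b, f u * g u
  have hA : |A - f a * δ| ≤ K * δ ^ 2 := hf.abs_integral_sub_mul_le hab.le
  have hB : |B - g a * δ| ≤ K * δ ^ 2 := hg.abs_integral_sub_mul_le hab.le
  have hH : |H - f a * g a * δ| ≤ 2 * K ^ 2 * δ ^ 2 := by
    have := (hf.mul_of_abs_le hg hfK hgK).abs_integral_sub_mul_le hab.le
    simpa only [NNReal.coe_add, NNReal.coe_mul, ← hδ, two_mul, sq] using this
  have hdecomp : δ⁻¹ * (A * B) - H = δ⁻¹ * ((A - f a * δ) * (B - g a * δ))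
      + f a * (B - g a * δ) + g a * (A - f a * δ) - (H - f a * g a * δ) := by
    field_simp
    ring
  have hAB : |δ⁻¹ * ((A - f a * δ) * (B - g a * δ))| ≤ K ^ 2 * δ ^ 2 := by
    rw [abs_mul, abs_mul, abs_inv, abs_of_pos hδ0]
    calc δ⁻¹ * (|A - f a * δ| * |B - g a * δ|) ≤ δ⁻¹ * (K * δ ^ 2 * (K * δ ^ 2)) := by
          gcongr
      _ = K ^ 2 * δ ^ 2 * δ := by field_simp
      _ ≤ K ^ 2 * δ ^ 2 * 1 := by gcongr
      _ = K ^ 2 * δ ^ 2 := mul_one _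
  have hfB : |f a * (B - g a * δ)| ≤ K ^ 2 * δ ^ 2 := by
    rw [abs_mul, sq, mul_assoc]; gcongr; exact hfK a
  have hgA : |g a * (A - f a * δ)| ≤ K ^ 2 * δ ^ 2 := by
    rw [abs_mul, sq, mul_assoc]; gcongr; exact hgK a
  rw [hdecomp]
  refine (abs_sub _ _).trans ?_
  linarith [abs_add_three (δ⁻¹ * ((A - f a * δ) * (B - g a * δ))) (f a * (B - g a * δ))
    (g a * (A - f a * δ))]

lemma eq_zero_of_notMem_Ioo_of_hasDerivAt {φ φ' : ℝ → ℝ} {a b : ℝ}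
    (hderiv : ∀ t, HasDerivAt φ (φ' t) t) (hcont : Continuous φ')
    (hsupp : ∀ t, t ∉ Ioo a b → φ t = 0) {t : ℝ} (ht : t ∉ Ioo a b) : φ' t = 0 := by
  have hφ' : φ' = deriv φ := funext fun t ↦ (hderiv t).deriv.symm
  have htsupp : tsupport φ ⊆ Icc a b :=
    closure_minimal (fun u hu ↦ Ioo_subset_Icc_self (not_imp_comm.1 (hsupp u) hu)) isClosed_Icc
  have hzero : (Icc a b)ᶜ ⊆ {u | φ' u = 0} := fun u hu ↦
    Function.notMem_support.1 fun h ↦ hu (htsupp (support_deriv_subset (hφ' ▸ h)))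
  have ht' : t ∈ closure (Icc a b)ᶜ := by rwa [closure_compl, interior_Icc]
  exact closure_minimal hzero (isClosed_eq hcont continuous_const) ht'

lemma LipschitzWith.abs_le_of_forall_notMem_Ioo {f : ℝ → ℝ} {K : ℝ≥0} (hf : LipschitzWith K f)
    (hzero : ∀ t, t ∉ Ioo (0 : ℝ) 1 → f t = 0) (t : ℝ) : |f t| ≤ K := by
  by_cases ht : t ∈ Ioo (0 : ℝ) 1
  · have := hf.dist_le_mul t 0
    rw [Real.dist_eq, Real.dist_eq, hzero 0 (by simp), sub_zero, sub_zero,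
      abs_of_pos ht.1] at this
    exact this.trans (mul_le_of_le_one_right K.2 ht.2.le)
  · rw [hzero t ht, abs_zero]
    exact K.2

lemma finsum_increment_mul_eq_sum_range {φ : ℝ → ℝ} (hsupp : ∀ t, t ∉ Ioo (0 : ℝ) 1 → φ t = 0)
    {l : ℕ} (hl : 0 < l) (F : ℤ → ℝ) :
    ∑ᶠ v : ℤ, (φ (((v : ℝ) + 1) / l) - φ ((v : ℝ) / l)) * F v
      = ∑ n ∈ range l, (φ (((n : ℝ) + 1) / l) - φ ((n : ℝ) / l)) * F n := by
  have hl' : (0 : ℝ) < l := Nat.cast_pos.2 hl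
  have hsub : (Function.support fun v : ℤ ↦ (φ (((v : ℝ) + 1) / l) - φ ((v : ℝ) / l)) * F v)
      ⊆ ((range l).map Nat.castEmbedding : Finset ℤ) := by
    intro v hv
    have hinc : φ (((v : ℝ) + 1) / l) - φ ((v : ℝ) / l) ≠ 0 := left_ne_zero_of_mul hv
    have hv0 : 0 ≤ v := by
      by_contra! hneg
      have hv1 : (v : ℝ) + 1 ≤ 0 := by exact_mod_cast hneg
      refine hinc ?_
      rw [hsupp _ fun h ↦ (div_pos_iff_of_pos_right hl').1 h.1 |>.not_ge hv1,
        hsupp _ fun h ↦ (div_pos_iff_of_pos_right hl').1 h.1 |>.not_ge (by linarith), sub_zero]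
    have hvl : v < l := by
      by_contra! hge
      have hvl' : (l : ℝ) ≤ v := by exact_mod_cast hge
      refine hinc ?_
      rw [hsupp _ fun h ↦ (div_lt_one hl').1 h.2 |>.not_ge (by linarith),
        hsupp _ fun h ↦ (div_lt_one hl').1 h.2 |>.not_ge hvl', sub_zero]
    lift v to ℕ using hv0
    simpa using hvl
  rw [finsum_eq_finsetSum_of_support_subset _ hsub, Finset.sum_map]
  simp

lemma sum_range_integral_div_eq_integral_zero_one {g : ℝ → ℝ} (hg : Continuous g) {l : ℕ}
    (hl : l ≠ 0) :
    ∑ n ∈ range l, ∫ u in (n : ℝ) / l..((n : ℝ) + 1) / l, g u = ∫ u in (0 : ℝ)..1, g u := by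
  have := intervalIntegral.sum_integral_adjacent_intervals (a := fun n : ℕ ↦ (n : ℝ) / l)
    (n := l) (μ := volume) (f := g) fun _ _ ↦ hg.intervalIntegrable _ _
  simpa [div_self (Nat.cast_ne_zero.2 hl : (l : ℝ) ≠ 0)] using this

lemma integral_zero_one_eq_integral_of_eqOn_zero {g : ℝ → ℝ} (hg : Continuous g) {h : ℝ}
    (hzero : EqOn g 0 (uIcc 0 h)) : ∫ u in (0 : ℝ)..1, g u = ∫ u in h..1, g u := by
  rw [← intervalIntegral.integral_add_adjacent_intervals (b := h) (hg.intervalIntegrable _ _)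
    (hg.intervalIntegrable _ _), intervalIntegral.integral_congr hzero]
  simp

section IncrementProducts

variable {φ φ' : ℝ → ℝ} {K : ℝ≥0}

lemma abs_mul_increment_mul_increment_sub_integral_le (hderiv : ∀ t, HasDerivAt φ (φ' t) t)
    (hφ' : LipschitzWith K φ') (hbound : ∀ t, |φ' t| ≤ K) {l : ℝ} (hl : 1 ≤ l) (x c : ℝ) :
    |l * ((φ ((x + 1) / l) - φ (x / l)) * (φ ((x - c + 1) / l) - φ ((x - c) / l)))
      - ∫ u in x / l..(x + 1) / l, φ' u * φ' (u - c / l)| ≤ 5 * K ^ 2 / l ^ 2 := by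
  have hl0 : 0 < l := by linarith
  have hwidth : (x + 1) / l - x / l = l⁻¹ := by field_simp; ring
  have hftc (a b : ℝ) : ∫ u in a..b, φ' u = φ b - φ a :=
    intervalIntegral.integral_eq_sub_of_hasDerivAt (fun u _ ↦ hderiv u)
      (hφ'.continuous.intervalIntegrable _ _)
  have hφ'shift : LipschitzWith K fun u ↦ φ' (u - c / l) := by
    simpa [Function.comp_def] using
      hφ'.comp (IsometryEquiv.subRight (c / l)).isometry.lipschitz
  have hcell : l * ((φ ((x + 1) / l) - φ (x / l)) * (φ ((x - c + 1) / l) - φ ((x - c) / l)))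
      = ((x + 1) / l - x / l)⁻¹ * ((∫ u in x / l..(x + 1) / l, φ' u) *
        ∫ u in x / l..(x + 1) / l, φ' (u - c / l)) := by
    rw [hftc, intervalIntegral.integral_comp_sub_right (fun u ↦ φ' u), hftc, hwidth, inv_inv,
      show (x + 1) / l - c / l = (x - c + 1) / l by ring, show x / l - c / l = (x - c) / l by ring]
  rw [hcell]
  calc _ ≤ 5 * K ^ 2 * ((x + 1) / l - x / l) ^ 2 :=
        abs_inv_mul_integral_mul_integral_sub_integral_mul_le hφ' hφ'shift hbound
          (fun u ↦ hbound _) (by gcongr; linarith) (by rw [hwidth]; exact inv_le_one_of_one_le₀ hl)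
    _ = 5 * K ^ 2 / l ^ 2 := by rw [hwidth]; field_simp

lemma abs_mul_finsum_increment_mul_increment_sub_integral_le
    (hderiv : ∀ t, HasDerivAt φ (φ' t) t) (hφ' : LipschitzWith K φ')
    (hsupp : ∀ t, t ∉ Ioo (0 : ℝ) 1 → φ t = 0) {l : ℕ} (hl : 0 < l) (c : ℝ) :
    |(l : ℝ) * (∑ᶠ v : ℤ, (φ (((v : ℝ) + 1) / l) - φ ((v : ℝ) / l)) *
        (φ (((v : ℝ) - c + 1) / l) - φ (((v : ℝ) - c) / l)))
      - ∫ u in (0 : ℝ)..1, φ' u * φ' (u - c / l)| ≤ 5 * K ^ 2 / l := by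
  have hcont := hφ'.continuous
  have hbound := hφ'.abs_le_of_forall_notMem_Ioo fun _ ↦
    eq_zero_of_notMem_Ioo_of_hasDerivAt hderiv hcont hsupp
  rw [finsum_increment_mul_eq_sum_range hsupp hl,
    ← sum_range_integral_div_eq_integral_zero_one (by fun_prop) hl.ne', mul_sum,
    ← sum_sub_distrib]
  calc _ ≤ ∑ _n ∈ range l, 5 * (K : ℝ) ^ 2 / l ^ 2 :=
        (abs_sum_le_sum_abs _ _).trans <| sum_le_sum fun n _ ↦ by
          simpa only [Int.cast_natCast] using abs_mul_increment_mul_increment_sub_integral_le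
            hderiv hφ' hbound (Nat.one_le_cast.2 hl) n c
    _ = 5 * (K : ℝ) ^ 2 / l := by
        rw [sum_const, card_range, nsmul_eq_mul]
        field_simp

end IncrementProducts

theorem stmt_4_general (φ φ' : ℝ → ℝ) (L : ℝ)
    (hderiv : ∀ t : ℝ, HasDerivAt φ (φ' t) t)
    (hlip : ∀ a b : ℝ, |φ' a - φ' b| ≤ L * |a - b|)
    (hsupp : ∀ t : ℝ, t ∉ Set.Ioo (0 : ℝ) 1 → φ t = 0)
    (φ₁ : ℝ → ℝ)
    (hφ₁ : ∀ t ∈ Set.Icc (0 : ℝ) 1, φ₁ t = ∫ u in t..(1 : ℝ), φ' u * φ' (u - t)) :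
    ∃ K : ℝ, ∀ l : ℕ, 2 ≤ l → ∀ s : ℕ, s ≤ l →
      |(l : ℝ) * (∑ᶠ v : ℤ,
            (φ (((v : ℝ) + 1) / l) - φ ((v : ℝ) / l)) *
              (φ (((v : ℝ) - s + 1) / l) - φ (((v : ℝ) - s) / l)))
          - φ₁ ((s : ℝ) / l)| ≤ K / l := by
  have hφ' : LipschitzWith L.toNNReal φ' := LipschitzWith.of_dist_le' fun a b ↦ by
    simpa only [Real.dist_eq] using hlip a b
  have hcont := hφ'.continuous
  refine ⟨5 * L.toNNReal ^ 2, fun l hl s hs ↦ ?_⟩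
  have hl0 : (0 : ℝ) < l := by positivity
  have hh : (s : ℝ) / l ∈ Icc (0 : ℝ) 1 :=
    ⟨by positivity, div_le_one_of_le₀ (by exact_mod_cast hs) hl0.le⟩
  have hshift_zero : EqOn (fun u ↦ φ' u * φ' (u - s / l)) 0 (uIcc 0 (s / l)) := by
    intro u hu
    rw [uIcc_of_le hh.1] at hu
    have : u - s / l ∉ Ioo (0 : ℝ) 1 := fun h ↦ by linarith [h.1, hu.2]
    simp [eq_zero_of_notMem_Ioo_of_hasDerivAt hderiv hcont hsupp this]
  rw [hφ₁ _ hh, ← integral_zero_one_eq_integral_of_eqOn_zero (by fun_prop) hshift_zero]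
  exact abs_mul_finsum_increment_mul_increment_sub_integral_le hderiv hφ' hsupp (by omega) s

/-- Discrete approximation of the kernel `φ₁(t) = ∫_t^1 φ'(u) φ'(u-t) du`:
for a `C¹` weight `φ` supported in `(0,1)` with Lipschitz derivative `φ'`,
there is a constant `K` (depending only on `φ`) such that for all integers `l ≥ 2`
and `0 ≤ s ≤ l`,
`| l Σ_{v ∈ ℤ} (φ((v+1)/l) - φ(v/l)) (φ((v-s+1)/l) - φ((v-s)/l)) - φ₁(s/l) | ≤ K / l`.
The sum over `ℤ` has finitely many nonzero terms and is expressed with `finsum`. -/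
theorem stmt_4 (φ φ' : ℝ → ℝ) (L : ℝ)
    (hderiv : ∀ t : ℝ, HasDerivAt φ (φ' t) t)
    (hlip : ∀ a b : ℝ, |φ' a - φ' b| ≤ L * |a - b|)
    (hsupp : ∀ t : ℝ, t ∉ Set.Ioo (0 : ℝ) 1 → φ t = 0)
    (φ₁ : ℝ → ℝ)
    (hφ₁ : ∀ t ∈ Set.Icc (0 : ℝ) 1, φ₁ t = ∫ u in t..(1 : ℝ), φ' u * φ' (u - t))
    (hφ₁' : ∀ t : ℝ, 1 < t → φ₁ t = 0) :
    ∃ K : ℝ, ∀ l : ℕ, 2 ≤ l → ∀ s : ℕ, s ≤ l →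
      |(l : ℝ) * (∑ᶠ v : ℤ,
            (φ (((v : ℝ) + 1) / l) - φ ((v : ℝ) / l)) *
              (φ (((v : ℝ) - s + 1) / l) - φ (((v : ℝ) - s) / l)))
          - φ₁ ((s : ℝ) / l)| ≤ K / l :=
  stmt_4_general φ φ' L hderiv hlip hsupp φ₁ hφ₁
end

section
/- Let f_1, f_2 : [0,∞) → ℝ be Lipschitz functions with f_1(t) = f_2(t) = 0 for t ≥ 1, and set Φ = ∫_0^1 f_1(s) f_2(s) ds and Ψ = ∫_0^1 s f_1(s) f_2(s) ds. Then there is a constant K depending only on f_1 and f_2 such that for all integers p ≥ 1, l_n ≥ 2 and every integer i ≥ 0, | Σ_{h=i}^{i+p l_n−2} Σ_{h'=h+1}^{i+p l_n−1} f_1((h'−h)/l_n) f_2((h'−h)/l_n) − l_n² ( p Φ − Ψ ) | ≤ K p l_n. -/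
/-!
Put `g = f₁ f₂` and `N = p l`. Grouping the pairs `h < h'` by `d = h' - h`, the double sum is
`∑_{1 ≤ d < N} (N - d) g(d / l)`; as `g` vanishes on `[1, ∞)` only `d ≤ l` contributes, leaving
`N ∑_{d ≤ l} g(d / l) - l ∑_{d ≤ l} (d / l) g(d / l)`. Both sums are right-endpoint Riemann sums of
functions that are Lipschitz on `[0, 1]`, so they are `l Φ` and `l Ψ` up to `O(1)` errors, and the
error of the whole expression is `O(p l)`.
-/

open MeasureTheory Finset
open scoped NNReal Interval

theorem LipschitzOnWith.mul_of_norm_le {α R : Type*} [PseudoMetricSpace α]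
    [NonUnitalSeminormedRing R] {f g : α → R} {s : Set α} {Kf Kg Mf Mg : ℝ≥0}
    (hf : LipschitzOnWith Kf f s) (hg : LipschitzOnWith Kg g s)
    (hfM : ∀ x ∈ s, ‖f x‖ ≤ Mf) (hgM : ∀ x ∈ s, ‖g x‖ ≤ Mg) :
    LipschitzOnWith (Mf * Kg + Kf * Mg) (fun x => f x * g x) s := by
  refine LipschitzOnWith.of_dist_le_mul fun x hx y hy => ?_
  rw [dist_eq_norm]
  calc ‖f x * g x - f y * g y‖ = ‖f x * (g x - g y) + (f x - f y) * g y‖ := by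
        rw [mul_sub, sub_mul, sub_add_sub_cancel]
    _ ≤ ‖f x‖ * ‖g x - g y‖ + ‖f x - f y‖ * ‖g y‖ :=
        norm_add_le_of_le (norm_mul_le _ _) (norm_mul_le _ _)
    _ ≤ Mf * (Kg * dist x y) + Kf * dist x y * Mg := by
        rw [← dist_eq_norm, ← dist_eq_norm]
        gcongr
        exacts [hfM x hx, hg.dist_le_mul x hx y hy, hf.dist_le_mul x hx y hy, hgM y hy]
    _ = ↑(Mf * Kg + Kf * Mg) * dist x y := by
        push_cast
        ring

theorem LipschitzOnWith.norm_le_of_eq_zero_Icc {E : Type*} [SeminormedAddCommGroup E]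
    {f : ℝ → E} {K : ℝ≥0} (hf : LipschitzOnWith K f (Set.Icc 0 1)) (h1 : f 1 = 0) :
    ∀ x ∈ Set.Icc (0 : ℝ) 1, ‖f x‖ ≤ K := fun x hx => by
  have hdist : dist x 1 ≤ 1 := by
    rw [Real.dist_eq, abs_sub_comm, abs_of_nonneg (by linarith [hx.2])]
    linarith [hx.1]
  calc ‖f x‖ = dist (f x) (f 1) := by rw [h1, dist_zero_right]
    _ ≤ K * dist x 1 := hf.dist_le_mul x hx 1 (Set.right_mem_Icc.2 zero_le_one)
    _ ≤ K := mul_le_of_le_one_right K.2 hdist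

theorem lipschitzOnWith_toNNReal_of_abs_sub_le {f : ℝ → ℝ} {L : ℝ} {s : Set ℝ}
    (h : ∀ a ∈ s, ∀ b ∈ s, |f a - f b| ≤ L * |a - b|) : LipschitzOnWith L.toNNReal f s :=
  LipschitzOnWith.of_dist_le_mul fun a ha b hb =>
    (h a ha b hb).trans (mul_le_mul_of_nonneg_right (Real.le_coe_toNNReal L) (abs_nonneg _))

theorem abs_mul_sub_intervalIntegral_le {g : ℝ → ℝ} {K : ℝ≥0} {a b : ℝ} (hab : a ≤ b)
    (hg : LipschitzOnWith K g (Set.Icc a b)) :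
    |(b - a) * g b - ∫ s in a..b, g s| ≤ K * (b - a) ^ 2 := by
  have hint : IntervalIntegrable g volume a b :=
    (hg.continuousOn.mono (Set.uIcc_of_le hab).subset).intervalIntegrable
  have hbound : ∀ s ∈ Ι a b, ‖g b - g s‖ ≤ K * (b - a) := fun s hs => by
    rw [Set.uIoc_of_le hab] at hs
    calc ‖g b - g s‖ = dist (g b) (g s) := (dist_eq_norm _ _).symm
      _ ≤ K * dist b s :=
          hg.dist_le_mul b (Set.right_mem_Icc.2 hab) s (Set.Ioc_subset_Icc_self hs)
      _ ≤ K * (b - a) := by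
          rw [Real.dist_eq, abs_of_nonneg (by linarith [hs.2])]
          gcongr
          linarith [hs.1]
  calc |(b - a) * g b - ∫ s in a..b, g s| = ‖∫ s in a..b, (g b - g s)‖ := by
        rw [intervalIntegral.integral_sub intervalIntegrable_const hint,
          intervalIntegral.integral_const, smul_eq_mul, Real.norm_eq_abs]
    _ ≤ K * (b - a) * |b - a| := intervalIntegral.norm_integral_le_of_norm_le_const hbound
    _ = K * (b - a) ^ 2 := by rw [abs_of_nonneg (sub_nonneg.2 hab)]; ring

theorem abs_sum_range_sub_intervalIntegral_le {g : ℝ → ℝ} {K : ℝ≥0}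
    (hg : LipschitzOnWith K g (Set.Icc 0 1)) {n : ℕ} (hn : 0 < n) :
    |∑ k ∈ range n, g ((k + 1) / n) - n * ∫ s in (0 : ℝ)..1, g s| ≤ K := by
  have hn' : (0 : ℝ) < n := Nat.cast_pos.2 hn
  set x : ℕ → ℝ := fun k => k / n
  have hx_mono : Monotone x := fun j k hjk => by
    simp only [x]
    gcongr
  have hx_sub : ∀ k < n, Set.Icc (x k) (x (k + 1)) ⊆ Set.Icc 0 1 := fun k hk =>
    Set.Icc_subset_Icc (by positivity) ((div_le_one hn').2 (by exact_mod_cast hk))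
  have hcell : ∀ k : ℕ, (k + 1 : ℝ) / n = x (k + 1) := fun k => by
    simp only [x, Nat.cast_succ]
  have hwidth : ∀ k, x (k + 1) - x k = 1 / n := fun k => by
    simp only [x, Nat.cast_succ]
    ring
  have hsplit : ∫ s in (0 : ℝ)..1, g s = ∑ k ∈ range n, ∫ s in x k..x (k + 1), g s := by
    rw [intervalIntegral.sum_integral_adjacent_intervals fun k hk =>
      ((hg.mono (hx_sub k hk)).continuousOn.mono
        (Set.uIcc_of_le (hx_mono k.le_succ)).subset).intervalIntegrable]
    simp [x, hn'.ne']
  calc |∑ k ∈ range n, g ((k + 1) / n) - n * ∫ s in (0 : ℝ)..1, g s|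
      = |∑ k ∈ range n, n * ((x (k + 1) - x k) * g (x (k + 1))
          - ∫ s in x k..x (k + 1), g s)| := by
        rw [hsplit, mul_sum, ← sum_sub_distrib]
        refine congrArg _ (sum_congr rfl fun k _ => ?_)
        rw [hcell k, hwidth]
        field_simp
    _ ≤ ∑ k ∈ range n, n * ((K : ℝ) * (1 / n) ^ 2) := by
        refine (abs_sum_le_sum_abs _ _).trans (sum_le_sum fun k hk => ?_)
        rw [abs_mul, abs_of_pos hn', ← hwidth k]
        gcongr
        exact abs_mul_sub_intervalIntegral_le (hx_mono k.le_succ)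
          (hg.mono (hx_sub k (mem_range.1 hk)))
    _ = K := by
        rw [sum_const, card_range, nsmul_eq_mul]
        field_simp

theorem sum_range_sum_range_sub {M : Type*} [AddCommMonoid M] (F : ℕ → M) (n : ℕ) :
    ∑ a ∈ range n, ∑ b ∈ range (n - a), F b = ∑ b ∈ range n, (n - b) • F b := by
  rw [sum_comm' (t' := range n) (s' := fun b => range (n - b))]
  · simp only [sum_const, card_range]
  · intro a b
    simp only [mem_range]
    omega

theorem sum_Icc_sum_Icc_sub_eq_sum_range (G : ℝ → ℝ) (i : ℕ) {N : ℕ} (hN : 2 ≤ N) :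
    ∑ h ∈ Icc i (i + N - 2), ∑ h' ∈ Icc (h + 1) (i + N - 1), G ((h' : ℝ) - h)
      = ∑ j ∈ range N, ((N : ℝ) - (j + 1)) * G (j + 1) := by
  have hshift : ∑ h ∈ Icc i (i + N - 2), ∑ h' ∈ Icc (h + 1) (i + N - 1), G ((h' : ℝ) - h)
      = ∑ a ∈ range (N - 1), ∑ b ∈ range (N - 1 - a), G (b + 1) := by
    rw [← Finset.Ico_add_one_right_eq_Icc, sum_Ico_eq_sum_range,
      show i + N - 2 + 1 - i = N - 1 by omega]
    refine sum_congr rfl fun a _ => ?_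
    rw [← Finset.Ico_add_one_right_eq_Icc, sum_Ico_eq_sum_range,
      show i + N - 1 + 1 - (i + a + 1) = N - 1 - a by omega]
    refine sum_congr rfl fun b _ => ?_
    push_cast
    ring_nf
  obtain ⟨n, rfl⟩ : ∃ n, N = n + 1 := ⟨N - 1, by omega⟩
  rw [hshift, Nat.add_sub_cancel, sum_range_sum_range_sub, sum_range_succ]
  push_cast
  simp only [sub_self, zero_mul, add_zero]
  refine sum_congr rfl fun b hb => ?_
  rw [nsmul_eq_mul, Nat.cast_sub (mem_range.1 hb).le]
  ring

theorem sum_range_sub_mul_eq {g : ℝ → ℝ} (hg : ∀ t, 1 ≤ t → g t = 0) {l N : ℕ} (hl : 0 < l)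
    (hlN : l ≤ N) :
    ∑ j ∈ range N, ((N : ℝ) - (j + 1)) * g ((j + 1) / l)
      = N * ∑ j ∈ range l, g ((j + 1) / l) - l * ∑ j ∈ range l, (j + 1) / l * g ((j + 1) / l) := by
  have hl' : (0 : ℝ) < l := Nat.cast_pos.2 hl
  rw [← sum_subset (range_subset_range.2 hlN), mul_sum, mul_sum, ← sum_sub_distrib]
  · refine sum_congr rfl fun j _ => ?_
    field_simp
  · intro j _ hj
    have hlj : l ≤ j + 1 := by
      simp only [mem_range, not_lt] at hj
      omega
    rw [hg _ ((one_le_div hl').2 (by exact_mod_cast hlj)), mul_zero]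

theorem abs_mul_sub_mul_sub_sq_mul_le {p l T₀ T₁ Φ Ψ K₀ K₁ : ℝ} (hp : 1 ≤ p) (hl : 0 ≤ l)
    (h₀ : |T₀ - l * Φ| ≤ K₀) (h₁ : |T₁ - l * Ψ| ≤ K₁) :
    |p * l * T₀ - l * T₁ - l ^ 2 * (p * Φ - Ψ)| ≤ (K₀ + K₁) * p * l := by
  have hK₁ : 0 ≤ K₁ := (abs_nonneg _).trans h₁
  calc |p * l * T₀ - l * T₁ - l ^ 2 * (p * Φ - Ψ)|
      = |p * l * (T₀ - l * Φ) - l * (T₁ - l * Ψ)| := by ring_nf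
    _ ≤ p * l * K₀ + l * K₁ := by
        refine (abs_sub _ _).trans (add_le_add ?_ ?_) <;>
          rw [abs_mul, abs_of_nonneg (by positivity)] <;> gcongr
    _ ≤ (K₀ + K₁) * p * l := by nlinarith [mul_nonneg (mul_nonneg (sub_nonneg.2 hp) hl) hK₁]

/-- Double-sum asymptotic (display (sum.phi.quadratic) of the paper): for Lipschitz
functions `f₁, f₂` on `[0,∞)` vanishing on `[1,∞)`, with `Φ = ∫_0^1 f₁ f₂` and
`Ψ = ∫_0^1 s f₁(s) f₂(s) ds`, there is a constant `K` such that for all `p ≥ 1`,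
`l ≥ 2` and `i ≥ 0`,
`| Σ_{h=i}^{i+pl-2} Σ_{h'=h+1}^{i+pl-1} f₁((h'-h)/l) f₂((h'-h)/l) - l² (p Φ - Ψ) | ≤ K p l`. -/
theorem stmt_5 (f₁ f₂ : ℝ → ℝ) (L₁ L₂ : ℝ)
    (hlip₁ : ∀ a b : ℝ, 0 ≤ a → 0 ≤ b → |f₁ a - f₁ b| ≤ L₁ * |a - b|)
    (hlip₂ : ∀ a b : ℝ, 0 ≤ a → 0 ≤ b → |f₂ a - f₂ b| ≤ L₂ * |a - b|)
    (hvan₁ : ∀ t : ℝ, 1 ≤ t → f₁ t = 0)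
    (hvan₂ : ∀ t : ℝ, 1 ≤ t → f₂ t = 0) :
    ∃ K : ℝ, ∀ p l : ℕ, 1 ≤ p → 2 ≤ l → ∀ i : ℕ,
      |(∑ h ∈ Finset.Icc i (i + p * l - 2), ∑ h' ∈ Finset.Icc (h + 1) (i + p * l - 1),
            f₁ (((h' : ℝ) - h) / l) * f₂ (((h' : ℝ) - h) / l))
          - (l : ℝ) ^ 2 * ((p : ℝ) * (∫ s in (0:ℝ)..1, f₁ s * f₂ s)
            - ∫ s in (0:ℝ)..1, s * (f₁ s * f₂ s))| ≤ K * p * l := by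
  have hf₁ := lipschitzOnWith_toNNReal_of_abs_sub_le (s := Set.Icc 0 1) fun a ha b hb =>
    hlip₁ a b ha.1 hb.1
  have hf₂ := lipschitzOnWith_toNNReal_of_abs_sub_le (s := Set.Icc 0 1) fun a ha b hb =>
    hlip₂ a b ha.1 hb.1
  obtain ⟨K₀, hg⟩ : ∃ K, LipschitzOnWith K (fun t => f₁ t * f₂ t) (Set.Icc 0 1) :=
    ⟨_, hf₁.mul_of_norm_le hf₂ (hf₁.norm_le_of_eq_zero_Icc (hvan₁ 1 le_rfl))
      (hf₂.norm_le_of_eq_zero_Icc (hvan₂ 1 le_rfl))⟩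
  obtain ⟨K₁, hsg⟩ : ∃ K, LipschitzOnWith K (fun t => t * (f₁ t * f₂ t)) (Set.Icc 0 1) :=
    ⟨_, LipschitzWith.id.lipschitzOnWith.mul_of_norm_le hg (Mf := 1)
      (fun x hx => by simpa [abs_of_nonneg hx.1] using hx.2)
      (hg.norm_le_of_eq_zero_Icc (by simp [hvan₁ 1 le_rfl]))⟩
  refine ⟨K₀ + K₁, fun p l hp hl i => ?_⟩
  have hl₀ : 0 < l := by omega
  have hpl : l ≤ p * l := Nat.le_mul_of_pos_left l hp
  rw [sum_Icc_sum_Icc_sub_eq_sum_range (fun t => f₁ (t / l) * f₂ (t / l)) i (hl.trans hpl),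
    sum_range_sub_mul_eq (g := fun t => f₁ t * f₂ t) (by simp +contextual [hvan₁]) hl₀ hpl]
  have E₀ := abs_sum_range_sub_intervalIntegral_le hg hl₀
  have E₁ := abs_sum_range_sub_intervalIntegral_le hsg hl₀
  push_cast
  exact abs_mul_sub_mul_sub_sq_mul_le (by exact_mod_cast hp) l.cast_nonneg E₀ E₁
end
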